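/- arXiv:1110.6034 — 4 statements merged into one kernel-verified Lean document; each statement's English description precedes it below -/
import Mathlib

section
/- Let n ≥ 2, N = {1,…,n}, and let (ϱ_I)_{I ⊆ N} be real numbers with ϱ_∅ = 0. Then the following identity holds: ∑_{ℓ=1}^{n} (-1)^{ℓ-1}(ℓ-1)! ∑_{D ∈ 𝒟_N^ℓ} ∏_{k=1}^{ℓ} ∏_{J ⊆ D_k} (1 + ϱ_J) = ∑_{k ≥ 1} ∑_{{I_1,…,I_k} ∈ ℐ_k} ∏_{h=1}^{k} ϱ_{I_h}, where 𝒟_N^ℓ is the set of partitions of N into ℓ nonempty atoms, and ℐ_k is the set of families of k distinct subsets of N whose union is N and which are connected (any two members joined by a chain of pairwise-intersecting members of the family). -/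
open Finset

/-- The set of partitions of `Fin n` into exactly `ℓ` nonempty, pairwise
disjoint blocks whose union is everything. -/
noncomputable def partitionsInto (n ℓ : ℕ) : Finset (Finset (Finset (Fin n))) := by
  classical
  exact Finset.univ.filter fun P =>
    P.card = ℓ ∧ (∀ B ∈ P, B.Nonempty) ∧
    (∀ B ∈ P, ∀ B' ∈ P, B ≠ B' → Disjoint B B') ∧ P.sup id = Finset.univ

/-- A family of sets is connected iff any two of its members are joined by a
chain of pairwise-intersecting members of the family. -/
def FamConnected {α : Type*} [DecidableEq α] (Fam : Finset (Finset α)) : Prop :=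
  ∀ I ∈ Fam, ∀ I' ∈ Fam,
    Relation.ReflTransGen (fun A B => A ∈ Fam ∧ B ∈ Fam ∧ (A ∩ B).Nonempty) I I'


/-! Since `ϱ ∅ = 0`, the product attached to a partition `D` expands into the sum of `∏ I ∈ F, ϱ I`
over the families `F` each of whose members lies in a block of `D`. For a family `F` without `∅`
these `D` are exactly the partitions that are unions of connected components of `F`, i.e. the
partitions of the set of its `m` components, so the coefficient of `∏ I ∈ F, ϱ I` is
`∑ ℓ, (-1)^(ℓ-1) (ℓ-1)! S(m, ℓ)` with `S` the Stirling numbers of the second kind. The recursion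
of `S` makes this sum telescope to `1` for `m = 1` and to `0` for `m ≥ 2`; and for `n ≥ 2` the
family `F` has a single component exactly when it covers `N` and is connected. -/

open scoped Nat

variable {α β : Type*}

section SetPartitions

variable [DecidableEq α]

structure IsSetPartition (s : Finset α) (P : Finset (Finset α)) : Prop where
  nonempty : ∀ B ∈ P, B.Nonempty
  disjoint : ∀ B ∈ P, ∀ B' ∈ P, B ≠ B' → Disjoint B B'
  sup_eq : P.sup id = s

namespace IsSetPartition

variable {s B B' : Finset α} {P : Finset (Finset α)} {x : α}

theorem subset (h : IsSetPartition s P) (hB : B ∈ P) : B ⊆ s :=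
  h.sup_eq ▸ le_sup (f := id) hB

theorem exists_mem (h : IsSetPartition s P) (hx : x ∈ s) : ∃ B ∈ P, x ∈ B := by
  rw [← h.sup_eq, mem_sup] at hx
  exact hx

theorem eq_of_mem (h : IsSetPartition s P) (hB : B ∈ P) (hB' : B' ∈ P) (hxB : x ∈ B)
    (hxB' : x ∈ B') : B = B' := by
  by_contra hne
  exact disjoint_left.mp (h.disjoint B hB B' hB' hne) hxB hxB'

theorem notMem_of_disjoint (h : IsSetPartition s P) (hB : B.Nonempty) (hBs : Disjoint B s) :
    B ∉ P := fun hBP => hB.ne_empty (disjoint_self.mp (hBs.mono_right (h.subset hBP)))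

theorem insert_of_disjoint (h : IsSetPartition s P) (hB : B.Nonempty) (hBs : Disjoint B s) :
    IsSetPartition (B ∪ s) (insert B P) where
  nonempty C hC := (mem_insert.mp hC).elim (· ▸ hB) (h.nonempty C)
  disjoint C hC C' hC' hne := by
    rcases mem_insert.mp hC with rfl | hCP <;> rcases mem_insert.mp hC' with rfl | hC'P
    · exact absurd rfl hne
    · exact hBs.mono_right (h.subset hC'P)
    · exact (hBs.mono_right (h.subset hCP)).symm
    · exact h.disjoint C hCP C' hC'P hne
  sup_eq := by rw [sup_insert, h.sup_eq, id, sup_eq_union]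

theorem erase (h : IsSetPartition s P) (hB : B ∈ P) : IsSetPartition (s \ B) (P.erase B) where
  nonempty C hC := h.nonempty C (mem_of_mem_erase hC)
  disjoint C hC C' hC' := h.disjoint C (mem_of_mem_erase hC) C' (mem_of_mem_erase hC')
  sup_eq := by
    ext x
    simp only [mem_sup, mem_erase, id, mem_sdiff]
    constructor
    · rintro ⟨C, ⟨hCB, hC⟩, hxC⟩
      exact ⟨h.subset hC hxC, fun hxB => hCB (h.eq_of_mem hC hB hxC hxB)⟩
    · rintro ⟨hxs, hxB⟩
      obtain ⟨C, hC, hxC⟩ := h.exists_mem hxs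
      exact ⟨C, ⟨fun hCB => hxB (hCB ▸ hxC), hC⟩, hxC⟩

end IsSetPartition

theorem isSetPartition_empty_iff {P : Finset (Finset α)} : IsSetPartition ∅ P ↔ P = ∅ := by
  refine ⟨fun h => eq_empty_of_forall_notMem fun B hB => ?_, fun h => ⟨?_, ?_, ?_⟩⟩
  · exact (h.nonempty B hB).ne_empty (subset_empty.mp (h.subset hB))
  all_goals simp [h]

noncomputable def setPartitions (s : Finset α) (ℓ : ℕ) : Finset (Finset (Finset α)) := by
  classical exact s.powerset.powerset.filter fun P => #P = ℓ ∧ IsSetPartition s P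

theorem mem_setPartitions {s : Finset α} {ℓ : ℕ} {P : Finset (Finset α)} :
    P ∈ setPartitions s ℓ ↔ #P = ℓ ∧ IsSetPartition s P := by
  classical
  unfold setPartitions
  rw [mem_filter, mem_powerset, and_iff_right_iff_imp]
  exact fun h _ hB => mem_powerset.mpr (h.2.subset hB)

theorem card_setPartitions_empty (ℓ : ℕ) :
    #(setPartitions (∅ : Finset α) ℓ) = Nat.stirlingSecond 0 ℓ := by
  have : setPartitions (∅ : Finset α) ℓ = if ℓ = 0 then {∅} else ∅ := by
    ext P
    rw [mem_setPartitions, isSetPartition_empty_iff]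
    split_ifs with hℓ <;> aesop
  cases ℓ <;> simp [this]

theorem card_setPartitions_insert_zero {s : Finset α} (a : α) :
    #(setPartitions (insert a s) 0) = 0 := by
  refine card_eq_zero.mpr (eq_empty_of_forall_notMem fun P hP => ?_)
  obtain ⟨hcard, h⟩ := mem_setPartitions.mp hP
  obtain ⟨B, hB, -⟩ := h.exists_mem (mem_insert_self a s)
  simp [card_eq_zero.mp hcard] at hB

variable {s : Finset α} {a : α} {ℓ : ℕ}

theorem card_filter_singleton_mem_setPartitions_insert (ha : a ∉ s) :
    #{D ∈ setPartitions (insert a s) (ℓ + 1) | {a} ∈ D} = #(setPartitions s ℓ) := by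
  have hdisj : Disjoint {a} s := disjoint_singleton_left.mpr ha
  refine card_bij' (fun D _ => D.erase {a}) (fun P _ => insert {a} P) ?_ ?_ ?_ ?_
  · intro D hD
    obtain ⟨⟨hcard, h⟩, haD⟩ := (mem_filter.mp hD).imp_left mem_setPartitions.mp
    refine mem_setPartitions.mpr ⟨by rw [card_erase_of_mem haD, hcard, Nat.add_sub_cancel], ?_⟩
    simpa [sdiff_singleton_eq_erase, erase_insert ha] using h.erase haD
  · intro P hP
    obtain ⟨hcard, h⟩ := mem_setPartitions.mp hP
    have hnot := h.notMem_of_disjoint (singleton_nonempty a) hdisj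
    refine mem_filter.mpr ⟨mem_setPartitions.mpr ⟨by rw [card_insert_of_notMem hnot, hcard], ?_⟩,
      mem_insert_self _ _⟩
    rw [insert_eq]
    exact h.insert_of_disjoint (singleton_nonempty a) hdisj
  · intro D hD
    exact insert_erase (mem_filter.mp hD).2
  · intro P hP
    exact erase_insert ((mem_setPartitions.mp hP).2.notMem_of_disjoint (singleton_nonempty a) hdisj)

theorem IsSetPartition.insert_insert_erase {P : Finset (Finset α)} {B : Finset α}
    (h : IsSetPartition s P) (hB : B ∈ P) (ha : a ∉ s) :
    IsSetPartition (insert a s) (insert (insert a B) (P.erase B)) ∧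
      insert a B ∉ P.erase B := by
  have hdisj : Disjoint (insert a B) (s \ B) :=
    disjoint_insert_left.mpr ⟨fun has => ha (mem_sdiff.mp has).1, disjoint_sdiff⟩
  have key := (h.erase hB).insert_of_disjoint (insert_nonempty a B) hdisj
  rw [insert_union, union_sdiff_of_subset (h.subset hB)] at key
  exact ⟨key, (h.erase hB).notMem_of_disjoint (insert_nonempty a B) hdisj⟩

theorem IsSetPartition.insert_insert_erase_injective {P P' : Finset (Finset α)}
    {B B' : Finset α} (h : IsSetPartition s P) (hB : B ∈ P) (h' : IsSetPartition s P')
    (hB' : B' ∈ P') (ha : a ∉ s)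
    (heq : insert (insert a B) (P.erase B) = insert (insert a B') (P'.erase B')) :
    P = P' ∧ B = B' := by
  obtain ⟨hpart, hnot⟩ := h.insert_insert_erase hB ha
  obtain ⟨-, hnot'⟩ := h'.insert_insert_erase hB' ha
  have hins : insert a B = insert a B' :=
    hpart.eq_of_mem (mem_insert_self _ _) (heq ▸ mem_insert_self _ _) (mem_insert_self a B)
      (mem_insert_self a B')
  obtain rfl : B = B' := by
    rw [← erase_insert fun haB => ha (h.subset hB haB), hins,
      erase_insert fun haB => ha (h'.subset hB' haB)]
  have herase : P.erase B = P'.erase B := by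
    rw [← erase_insert hnot, heq, hins, erase_insert hnot']
  exact ⟨by rw [← insert_erase hB, herase, insert_erase hB'], rfl⟩

theorem IsSetPartition.insert_erase_erase {D : Finset (Finset α)} {B : Finset α}
    (h : IsSetPartition (insert a s) D) (hB : B ∈ D) (haB : a ∈ B) (hne : B ≠ {a})
    (ha : a ∉ s) :
    IsSetPartition s (insert (B.erase a) (D.erase B)) ∧ B.erase a ∉ D.erase B := by
  have hne' : (B.erase a).Nonempty := by
    by_contra hemp
    rw [not_nonempty_iff_eq_empty, erase_eq_empty_iff] at hemp
    exact hemp.elim (ne_empty_of_mem haB) hne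
  have hdisj : Disjoint (B.erase a) (insert a s \ B) :=
    disjoint_sdiff.mono_left (erase_subset a B)
  have key := (h.erase hB).insert_of_disjoint hne' hdisj
  have hcover : B.erase a ∪ (insert a s \ B) = s := by
    have := h.subset hB
    ext x
    grind
  rw [hcover] at key
  exact ⟨key, (h.erase hB).notMem_of_disjoint hne' hdisj⟩

theorem card_filter_singleton_notMem_setPartitions_insert (ha : a ∉ s) :
    #{D ∈ setPartitions (insert a s) (ℓ + 1) | {a} ∉ D} = (ℓ + 1) * #(setPartitions s (ℓ + 1)) := by
  have hsigma :
      #((setPartitions s (ℓ + 1)).sigma fun P => P) = (ℓ + 1) * #(setPartitions s (ℓ + 1)) := by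
    rw [card_sigma, sum_congr rfl fun P hP => (mem_setPartitions.mp hP).1, sum_const, smul_eq_mul,
      mul_comm]
  rw [← hsigma]
  symm
  refine card_bij (fun p _ => insert (insert a p.2) (p.1.erase p.2)) ?_ ?_ ?_
  · rintro ⟨P, B⟩ hp
    obtain ⟨hP, hB⟩ : P ∈ _ ∧ B ∈ P := mem_sigma.mp hp
    obtain ⟨hcard, h⟩ := mem_setPartitions.mp hP
    obtain ⟨h', hnot⟩ := h.insert_insert_erase hB ha
    refine mem_filter.mpr ⟨mem_setPartitions.mpr ⟨?_, h'⟩, fun hmem => ?_⟩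
    · rw [card_insert_of_notMem hnot, card_erase_of_mem hB, hcard, Nat.add_sub_cancel]
    · rcases mem_insert.mp hmem with heq | hmem
      · obtain ⟨x, hx⟩ := h.nonempty B hB
        have hxa : x = a := mem_singleton.mp (heq ▸ mem_insert_of_mem hx)
        exact ha (h.subset hB (hxa ▸ hx))
      · exact ha (h.subset (mem_of_mem_erase hmem) (mem_singleton_self a))
  · rintro ⟨P, B⟩ hp ⟨P', B'⟩ hp' heq
    obtain ⟨hP, hB⟩ : P ∈ _ ∧ B ∈ P := mem_sigma.mp hp
    obtain ⟨hP', hB'⟩ : P' ∈ _ ∧ B' ∈ P' := mem_sigma.mp hp'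
    obtain ⟨rfl, rfl⟩ := (mem_setPartitions.mp hP).2.insert_insert_erase_injective hB
      (mem_setPartitions.mp hP').2 hB' ha heq
    rfl
  · intro D hD
    obtain ⟨hD, hsing⟩ := mem_filter.mp hD
    obtain ⟨hcard, h⟩ := mem_setPartitions.mp hD
    obtain ⟨B, hB, haB⟩ := h.exists_mem (mem_insert_self a s)
    obtain ⟨h', hnot⟩ := h.insert_erase_erase hB haB (fun hBa => hsing (hBa ▸ hB)) ha
    refine ⟨⟨_, B.erase a⟩, mem_sigma.mpr ⟨mem_setPartitions.mpr ⟨?_, h'⟩, mem_insert_self _ _⟩, ?_⟩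
    · rw [card_insert_of_notMem hnot, card_erase_of_mem hB, hcard, Nat.add_sub_cancel]
    · dsimp only
      rw [erase_insert hnot, insert_erase haB, insert_erase hB]

theorem card_setPartitions (s : Finset α) (ℓ : ℕ) :
    #(setPartitions s ℓ) = Nat.stirlingSecond #s ℓ := by
  induction s using Finset.induction_on generalizing ℓ with
  | empty => exact card_setPartitions_empty ℓ
  | @insert a s ha ih =>
    rw [card_insert_of_notMem ha]
    cases ℓ with
    | zero => exact card_setPartitions_insert_zero a
    | succ ℓ =>
      rw [← card_filter_add_card_filter_not (fun D => {a} ∈ D),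
        card_filter_singleton_mem_setPartitions_insert ha,
        card_filter_singleton_notMem_setPartitions_insert ha, ih, ih, Nat.stirlingSecond_succ_succ,
        add_comm]

end SetPartitions

section Saturated

def IsSaturated (f : α → β) (s : Finset α) (D : Finset (Finset α)) : Prop :=
  ∀ B ∈ D, ∀ x ∈ s, ∀ y ∈ B, f x = f y → x ∈ B

instance [DecidableEq α] [DecidableEq β] (f : α → β) (s : Finset α) :
    DecidablePred (IsSaturated f s) :=
  fun _ => by unfold IsSaturated; infer_instance

variable [DecidableEq β] {f : α → β} {s : Finset α}

theorem image_filter_mem_of_subset {q : Finset β} (hq : q ⊆ s.image f) :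
    {x ∈ s | f x ∈ q}.image f = q := by
  ext b
  simp only [mem_image, mem_filter]
  refine ⟨fun ⟨x, ⟨_, hx⟩, hxb⟩ => hxb ▸ hx, fun hb => ?_⟩
  obtain ⟨x, hx, rfl⟩ := mem_image.mp (hq hb)
  exact ⟨x, ⟨hx, hb⟩, rfl⟩

variable [DecidableEq α]

theorem IsSetPartition.filter_mem_image {D : Finset (Finset α)} {B : Finset α}
    (h : IsSetPartition s D) (hsat : IsSaturated f s D) (hB : B ∈ D) :
    {x ∈ s | f x ∈ B.image f} = B := by
  ext x
  simp only [mem_filter, mem_image]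
  exact ⟨fun ⟨hx, y, hy, hxy⟩ => hsat B hB x hx y hy hxy.symm,
    fun hx => ⟨h.subset hB hx, x, hx, rfl⟩⟩

theorem IsSetPartition.image {D : Finset (Finset α)} (h : IsSetPartition s D)
    (hsat : IsSaturated f s D) : IsSetPartition (s.image f) (D.image (image f)) where
  nonempty := by
    simp only [mem_image, forall_exists_index, and_imp, forall_apply_eq_imp_iff₂, image_nonempty]
    exact h.nonempty
  disjoint := by
    simp only [mem_image, forall_exists_index, and_imp, forall_apply_eq_imp_iff₂]
    intro B hB B' hB' hne
    refine disjoint_left.mpr fun b hb hb' => hne ?_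
    obtain ⟨x, hx, rfl⟩ := mem_image.mp hb
    obtain ⟨y, hy, hxy⟩ := mem_image.mp hb'
    rw [h.eq_of_mem hB hB' hx (hsat B' hB' x (h.subset hB hx) y hy hxy.symm)]
  sup_eq := by
    ext b
    simp only [← h.sup_eq, sup_image, Function.id_comp, mem_sup, mem_image]
    exact ⟨fun ⟨B, hB, x, hx, hxb⟩ => ⟨x, ⟨B, hB, hx⟩, hxb⟩,
      fun ⟨x, ⟨B, hB, hx⟩, hxb⟩ => ⟨B, hB, x, hx, hxb⟩⟩

theorem IsSetPartition.preimage {Q : Finset (Finset β)} (h : IsSetPartition (s.image f) Q) :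
    IsSetPartition s (Q.image fun q => {x ∈ s | f x ∈ q}) ∧
      IsSaturated f s (Q.image fun q => {x ∈ s | f x ∈ q}) := by
  refine ⟨⟨?_, ?_, ?_⟩, ?_⟩
  · simp only [mem_image, forall_exists_index, and_imp, forall_apply_eq_imp_iff₂]
    intro q hq
    obtain ⟨b, hb⟩ := h.nonempty q hq
    obtain ⟨x, hx, rfl⟩ := mem_image.mp (h.subset hq hb)
    exact ⟨x, mem_filter.mpr ⟨hx, hb⟩⟩
  · simp only [mem_image, forall_exists_index, and_imp, forall_apply_eq_imp_iff₂]
    intro q hq q' hq' hne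
    refine disjoint_filter.mpr fun x _ hxq hxq' => ?_
    exact disjoint_left.mp (h.disjoint q hq q' hq' fun hqq => hne (hqq ▸ rfl)) hxq hxq'
  · ext x
    simp only [mem_sup, mem_image, id, exists_exists_and_eq_and, mem_filter]
    refine ⟨fun ⟨_, _, hx, _⟩ => hx, fun hx => ?_⟩
    obtain ⟨q, hq, hxq⟩ := h.exists_mem (mem_image_of_mem f hx)
    exact ⟨q, hq, hx, hxq⟩
  · simp only [IsSaturated, mem_image, forall_exists_index, and_imp, forall_apply_eq_imp_iff₂,
      mem_filter]
    exact fun q _ x hx y _ hyq hxy => ⟨hx, hxy ▸ hyq⟩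

theorem card_filter_isSaturated_setPartitions (f : α → β) (s : Finset α) (ℓ : ℕ) :
    #{D ∈ setPartitions s ℓ | IsSaturated f s D} = #(setPartitions (s.image f) ℓ) := by
  refine card_bij' (fun D _ => D.image (image f)) (fun Q _ => Q.image fun q => {x ∈ s | f x ∈ q})
    ?_ ?_ ?_ ?_
  · intro D hD
    obtain ⟨⟨hcard, h⟩, hsat⟩ := (mem_filter.mp hD).imp_left mem_setPartitions.mp
    refine mem_setPartitions.mpr ⟨?_, h.image hsat⟩
    rw [card_image_of_injOn fun B hB B' hB' hBB' => ?_, hcard]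
    rw [← h.filter_mem_image hsat hB, ← h.filter_mem_image hsat hB', hBB']
  · intro Q hQ
    obtain ⟨hcard, h⟩ := mem_setPartitions.mp hQ
    obtain ⟨h', hsat⟩ := h.preimage
    refine mem_filter.mpr ⟨mem_setPartitions.mpr ⟨?_, h'⟩, hsat⟩
    rw [card_image_of_injOn fun q hq q' hq' hqq' => ?_, hcard]
    rw [← image_filter_mem_of_subset (h.subset hq), ← image_filter_mem_of_subset (h.subset hq'),
      hqq']
  · intro D hD
    obtain ⟨⟨-, h⟩, hsat⟩ := (mem_filter.mp hD).imp_left mem_setPartitions.mp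
    rw [image_image]
    exact (image_congr fun B hB => h.filter_mem_image hsat hB).trans image_id
  · intro Q hQ
    have h := (mem_setPartitions.mp hQ).2
    rw [image_image]
    exact (image_congr fun q hq => image_filter_mem_of_subset (h.subset hq)).trans image_id

end Saturated

section Connectivity

def CoMember (Fam : Finset (Finset α)) (x y : α) : Prop := ∃ I ∈ Fam, x ∈ I ∧ y ∈ I

instance {Fam : Finset (Finset α)} : Std.Symm (CoMember Fam) :=
  ⟨fun _ _ ⟨I, hI, hx, hy⟩ => ⟨I, hI, hy, hx⟩⟩

variable [DecidableEq α] {Fam : Finset (Finset α)}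

theorem reflTransGen_members_of_reflTransGen_coMember {x y : α}
    (h : Relation.ReflTransGen (CoMember Fam) x y) {I I' : Finset α} (hI : I ∈ Fam) (hx : x ∈ I)
    (hI' : I' ∈ Fam) (hy : y ∈ I') :
    Relation.ReflTransGen (fun A B => A ∈ Fam ∧ B ∈ Fam ∧ (A ∩ B).Nonempty) I I' := by
  induction h generalizing I' with
  | refl => exact .single ⟨hI, hI', x, mem_inter.mpr ⟨hx, hy⟩⟩
  | @tail z w _ hzw ih =>
    obtain ⟨J, hJ, hzJ, hwJ⟩ := hzw
    exact (ih hJ hzJ).tail ⟨hJ, hI', w, mem_inter.mpr ⟨hwJ, hy⟩⟩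

theorem reflTransGen_coMember_of_reflTransGen_members {I I' : Finset α}
    (h : Relation.ReflTransGen (fun A B => A ∈ Fam ∧ B ∈ Fam ∧ (A ∩ B).Nonempty) I I')
    (hI : I ∈ Fam) {x y : α} (hx : x ∈ I) (hy : y ∈ I') :
    Relation.ReflTransGen (CoMember Fam) x y := by
  induction h generalizing y with
  | refl => exact .single ⟨I, hI, hx, hy⟩
  | @tail J K _ hJK ih =>
    obtain ⟨-, hK, z, hz⟩ := hJK
    exact (ih (mem_inter.mp hz).1).tail ⟨K, hK, (mem_inter.mp hz).2, hy⟩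

theorem nonempty_sup_eq_univ_famConnected_iff [Fintype α] [Nontrivial α]
    (hFam : ∀ I ∈ Fam, I.Nonempty) :
    Fam.Nonempty ∧ Fam.sup id = univ ∧ FamConnected Fam ↔
      ∀ x y : α, Quot.mk (CoMember Fam) x = Quot.mk _ y := by
  simp only [Quot.eq, Relation.EqvGen.eqvGen_eq_reflTransGen]
  constructor
  · rintro ⟨-, hcover, hconn⟩ x y
    obtain ⟨I, hI, hx⟩ := mem_sup.mp (hcover ▸ mem_univ x)
    obtain ⟨I', hI', hy⟩ := mem_sup.mp (hcover ▸ mem_univ y)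
    exact reflTransGen_coMember_of_reflTransGen_members (hconn I hI I' hI') hI hx hy
  · intro hrel
    have hcover : Fam.sup id = univ := by
      refine eq_univ_of_forall fun x => ?_
      obtain ⟨y, hyx⟩ := exists_ne x
      obtain hxy | ⟨-, ⟨I, hI, hxI, -⟩, -⟩ := Relation.ReflTransGen.cases_head (hrel x y)
      · exact absurd hxy.symm hyx
      · exact mem_sup.mpr ⟨I, hI, hxI⟩
    obtain ⟨I, hI, -⟩ := mem_sup.mp (hcover ▸ mem_univ (Classical.arbitrary α))
    refine ⟨⟨I, hI⟩, hcover, fun I hI I' hI' => ?_⟩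
    obtain ⟨x, hx⟩ := hFam I hI
    obtain ⟨y, hy⟩ := hFam I' hI'
    exact reflTransGen_members_of_reflTransGen_coMember (hrel x y) hI hx hI' hy

theorem subordinate_iff_isSaturated [Fintype α] {D : Finset (Finset α)}
    (hD : IsSetPartition univ D) (hFam : ∀ I ∈ Fam, I.Nonempty) :
    (∀ I ∈ Fam, ∃ B ∈ D, I ⊆ B) ↔ IsSaturated (Quot.mk (CoMember Fam)) univ D := by
  constructor
  · intro hsub B hB x _ y hy hxy
    have key : ∀ x y, Relation.EqvGen (CoMember Fam) x y → (x ∈ B ↔ y ∈ B) := by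
      intro x y hxy
      induction hxy with
      | rel x y hxy =>
        obtain ⟨I, hI, hx, hy⟩ := hxy
        obtain ⟨B', hB', hIB'⟩ := hsub I hI
        exact ⟨fun hxB => hD.eq_of_mem hB hB' hxB (hIB' hx) ▸ hIB' hy,
          fun hyB => hD.eq_of_mem hB hB' hyB (hIB' hy) ▸ hIB' hx⟩
      | refl => exact .rfl
      | symm _ _ _ ih => exact ih.symm
      | trans _ _ _ _ _ ih ih' => exact ih.trans ih'
    exact (key x y (Quot.eqvGen_exact hxy)).mpr hy
  · intro hsat I hI
    obtain ⟨x, hx⟩ := hFam I hI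
    obtain ⟨B, hB, hxB⟩ := hD.exists_mem (mem_univ x)
    exact ⟨B, hB, fun y hy => hsat B hB y (mem_univ y) x hxB (Quot.sound ⟨I, hI, hy, hx⟩)⟩

end Connectivity

section Stirling

open Nat

theorem sum_range_neg_one_pow_mul_factorial_mul_stirlingSecond {R : Type*} [CommRing R]
    {m N : ℕ} (hm : m ≠ 0) (hmN : m ≤ N) :
    ∑ k ∈ range N, (-1 : R) ^ k * k ! * stirlingSecond m (k + 1) = if m = 1 then 1 else 0 := by
  obtain ⟨m, rfl⟩ := exists_eq_succ_of_ne_zero hm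
  obtain ⟨N, rfl⟩ := Nat.exists_eq_add_of_lt (lt_of_lt_of_le m.lt_succ_self hmN)
  rcases eq_or_ne m 0 with rfl | hm0
  · rw [sum_range_succ']
    simp [stirlingSecond_one_right, stirlingSecond_eq_zero_of_lt]
  rw [if_neg (by omega)]
  have hstep (k : ℕ) : (-1 : R) ^ k * k ! * stirlingSecond (m + 1) (k + 1) =
      (-1 : R) ^ k * (k + 1)! * stirlingSecond m (k + 1) +
        (-1 : R) ^ k * k ! * stirlingSecond m k := by
    rw [stirlingSecond_succ_succ, factorial_succ]
    push_cast
    ring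
  rw [sum_congr rfl fun k _ => hstep k, sum_add_distrib, sum_range_succ, sum_range_succ',
    stirlingSecond_eq_zero_of_lt (by omega : m < m + N + 1)]
  obtain ⟨m, rfl⟩ := exists_eq_succ_of_ne_zero hm0
  rw [stirlingSecond_succ_zero, add_add_add_comm, ← sum_add_distrib]
  simp only [cast_zero, mul_zero, add_zero]
  exact sum_eq_zero fun k _ => by ring

theorem sum_Icc_neg_one_pow_mul_factorial_mul_stirlingSecond {R : Type*} [CommRing R]
    {m N : ℕ} (hm : m ≠ 0) (hmN : m ≤ N) :
    ∑ ℓ ∈ Icc 1 N, (-1 : R) ^ (ℓ - 1) * (ℓ - 1)! * stirlingSecond m ℓ =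
      if m = 1 then 1 else 0 := by
  rw [← Ico_add_one_right_eq_Icc, sum_Ico_eq_sum_range, Nat.add_sub_cancel,
    ← sum_range_neg_one_pow_mul_factorial_mul_stirlingSecond hm hmN]
  refine sum_congr rfl fun k _ => ?_
  rw [Nat.add_sub_cancel_left, Nat.add_comm]

end Stirling

section Expansion

variable [Fintype α] [DecidableEq α] {R : Type*} [CommRing R]

theorem prod_prod_powerset_one_add {ϱ : Finset α → R} (h0 : ϱ ∅ = 0) {D : Finset (Finset α)}
    (hD : ∀ B ∈ D, ∀ B' ∈ D, B ≠ B' → Disjoint B B') :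
    ∏ B ∈ D, ∏ J ∈ B.powerset, (1 + ϱ J) =
      ∑ Fam with ∀ I ∈ Fam, ∃ B ∈ D, I ⊆ B, ∏ I ∈ Fam, ϱ I := by
  have hdisj : (D : Set (Finset α)).PairwiseDisjoint fun B => B.powerset.erase ∅ := by
    intro B hB B' hB' hne
    refine disjoint_left.mpr fun J hJ hJ' => ?_
    obtain ⟨hJne, hJB⟩ := mem_erase.mp hJ
    obtain ⟨x, hx⟩ := nonempty_iff_ne_empty.mpr hJne
    exact disjoint_left.mp (hD B hB B' hB' hne) (mem_powerset.mp hJB hx)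
      (mem_powerset.mp (mem_of_mem_erase hJ') hx)
  calc ∏ B ∈ D, ∏ J ∈ B.powerset, (1 + ϱ J)
      = ∏ B ∈ D, ∏ J ∈ B.powerset.erase ∅, (1 + ϱ J) :=
        prod_congr rfl fun B _ => (prod_erase _ (by rw [h0, add_zero])).symm
    _ = ∏ J ∈ D.biUnion fun B => B.powerset.erase ∅, (1 + ϱ J) := (prod_biUnion hdisj).symm
    _ = ∑ Fam ∈ (D.biUnion fun B => B.powerset.erase ∅).powerset, ∏ I ∈ Fam, ϱ I := prod_one_add _
    _ = ∑ Fam with ∀ I ∈ Fam, ∃ B ∈ D, I ⊆ B, ∏ I ∈ Fam, ϱ I := by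
      refine sum_subset (fun Fam hFam => mem_filter.mpr ⟨mem_univ _, fun I hI => ?_⟩)
        fun Fam hFam hnot => prod_eq_zero (i := ∅) ?_ h0
      · obtain ⟨B, hB, hI⟩ := mem_biUnion.mp (mem_powerset.mp hFam hI)
        exact ⟨B, hB, mem_powerset.mp (mem_of_mem_erase hI)⟩
      · by_contra hempty
        refine hnot (mem_powerset.mpr fun I hI => ?_)
        obtain ⟨B, hB, hIB⟩ := (mem_filter.mp hFam).2 I hI
        exact mem_biUnion.mpr ⟨B, hB, mem_erase.mpr ⟨ne_of_mem_of_not_mem hI hempty,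
          mem_powerset.mpr hIB⟩⟩

end Expansion

theorem partitionsInto_eq_setPartitions (n ℓ : ℕ) : partitionsInto n ℓ = setPartitions univ ℓ := by
  ext D
  rw [mem_setPartitions, partitionsInto, mem_filter]
  exact ⟨fun ⟨_, h1, h2, h3, h4⟩ => ⟨h1, h2, h3, h4⟩,
    fun ⟨h1, h2, h3, h4⟩ => ⟨mem_univ D, h1, h2, h3, h4⟩⟩

open Classical in
theorem sum_neg_one_pow_mul_factorial_mul_card_subordinate_setPartitions [Fintype α]
    [DecidableEq α] [Nontrivial α] {R : Type*} [CommRing R] {Fam : Finset (Finset α)}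
    (hFam : ∀ I ∈ Fam, I.Nonempty) {N : ℕ} (hN : Fintype.card α ≤ N) :
    ∑ ℓ ∈ Icc 1 N, (-1 : R) ^ (ℓ - 1) * (ℓ - 1)! *
        #{D ∈ setPartitions univ ℓ | ∀ I ∈ Fam, ∃ B ∈ D, I ⊆ B} =
      if Fam.Nonempty ∧ Fam.sup id = univ ∧ FamConnected Fam then 1 else 0 := by
  -- Points outside every member of `Fam` form singleton classes of their own.
  set components := (univ : Finset α).image (Quot.mk (CoMember Fam))
  have hcard ℓ : #{D ∈ setPartitions univ ℓ | ∀ I ∈ Fam, ∃ B ∈ D, I ⊆ B} =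
      Nat.stirlingSecond #components ℓ := by
    rw [filter_congr fun D hD => subordinate_iff_isSaturated (mem_setPartitions.mp hD).2 hFam,
      card_filter_isSaturated_setPartitions, card_setPartitions]
  have hpos : #components ≠ 0 := (univ_nonempty.image _).card_pos.ne'
  have hle : #components ≤ N := card_image_le.trans hN
  simp_rw [hcard]
  rw [sum_Icc_neg_one_pow_mul_factorial_mul_stirlingSecond hpos hle]
  refine if_congr ?_ rfl rfl
  rw [nonempty_sup_eq_univ_famConnected_iff hFam, show #components = 1 ↔ #components ≤ 1 by omega,
    card_le_one]
  simp only [components, forall_mem_image, mem_univ, forall_const]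

open Classical in
/-- The combinatorial cancellation identity (2.5): expanding
`∑_ℓ (-1)^{ℓ-1}(ℓ-1)! ∑_{D ∈ 𝒟_N^ℓ} ∏_k ∏_{J ⊆ D_k} (1 + ϱ_J)` yields the sum of
`∏_I ϱ_I` over connected families of distinct subsets of `N` covering `N`. -/
theorem cancellation_identity (n : ℕ) (hn : 2 ≤ n) (ϱ : Finset (Fin n) → ℝ)
    (h0 : ϱ ∅ = 0) :
    ∑ ℓ ∈ Finset.Icc 1 n, (-1 : ℝ) ^ (ℓ - 1) * (Nat.factorial (ℓ - 1) : ℝ) *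
        ∑ D ∈ partitionsInto n ℓ, ∏ B ∈ D, ∏ J ∈ B.powerset, (1 + ϱ J) =
      ∑ Fam ∈ Finset.univ.filter (fun Fam : Finset (Finset (Fin n)) =>
          Fam.Nonempty ∧ Fam.sup id = Finset.univ ∧ FamConnected Fam),
        ∏ I ∈ Fam, ϱ I := by
  have : Nontrivial (Fin n) := Fin.nontrivial_iff_two_le.mpr hn
  calc _ = ∑ ℓ ∈ Icc 1 n, (-1 : ℝ) ^ (ℓ - 1) * (ℓ - 1)! * ∑ D ∈ setPartitions univ ℓ,
        ∑ Fam with ∀ I ∈ Fam, ∃ B ∈ D, I ⊆ B, ∏ I ∈ Fam, ϱ I := by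
        refine sum_congr rfl fun ℓ _ => ?_
        rw [partitionsInto_eq_setPartitions]
        exact congrArg _ (sum_congr rfl fun D hD =>
          prod_prod_powerset_one_add h0 (mem_setPartitions.mp hD).2.disjoint)
    _ = ∑ Fam, (∑ ℓ ∈ Icc 1 n, (-1 : ℝ) ^ (ℓ - 1) * (ℓ - 1)! *
          #{D ∈ setPartitions univ ℓ | ∀ I ∈ Fam, ∃ B ∈ D, I ⊆ B}) * ∏ I ∈ Fam, ϱ I := by
        simp only [sum_filter, card_filter, Nat.cast_sum, Nat.cast_ite, Nat.cast_one, Nat.cast_zero,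
          mul_sum, sum_mul, mul_ite, ite_mul, mul_one, mul_zero, zero_mul]
        rw [sum_comm]
        exact sum_congr rfl fun ℓ _ => sum_comm
    _ = _ := by
        rw [sum_filter]
        refine sum_congr rfl fun Fam _ => ?_
        by_cases hempty : ∅ ∈ Fam
        · simp [prod_eq_zero hempty h0]
        · rw [sum_neg_one_pow_mul_factorial_mul_card_subordinate_setPartitions
            (fun I hI => nonempty_iff_ne_empty.mpr (ne_of_mem_of_not_mem hI hempty))
            (Fintype.card_fin n).le, ite_mul, one_mul, zero_mul]
end

section
/- Let {I_1,…,I_k} be a family of distinct subsets of N = {1,…,n}, decomposed into h maximal connected components 𝒞_1,…,𝒞_h with supports C̃_m := ∪_{I ∈ 𝒞_m} I of cardinalities c_m. Then ∑_{ℓ=1}^{n} (-1)^{ℓ-1}(ℓ-1)! · |{partitions D of N into ℓ atoms such that for each m there exists an atom of D containing C̃_m}| = ∑_{ℓ=1}^{n} (-1)^{ℓ-1}(ℓ-1)! · d^ℓ_{n+h-(c_1+⋯+c_h)}, where d^ℓ_m is the Stirling number of the second kind. -/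
/-!
An atom of a partition that meets a support `C̃_m` must contain it, since `C̃_m` lies inside
some atom and atoms are disjoint. So the partitions counted on the left are exactly those whose
atoms are unions of fibres of the map contracting each `C̃_m` to a point. Pulling partitions back
along a surjection `f` is a bijection, preserving the number of atoms, onto the partitions whose
atoms are unions of `f`-fibres. The contracted set has `n - (c_1 + ⋯ + c_h) + h` points, so the
two sums agree term by term.
-/

open Finset

/-- Stirling number of the second kind. -/
noncomputable def stirling2 (n ℓ : ℕ) : ℕ := (partitionsInto n ℓ).card

open Function

theorem eq_of_mem_of_mem_of_pairwise_disjoint {α : Type*} {P : Finset (Finset α)}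
    (hP : ∀ B ∈ P, ∀ B' ∈ P, B ≠ B' → Disjoint B B') {B B' : Finset α} (hB : B ∈ P)
    (hB' : B' ∈ P) {x : α} (hxB : x ∈ B) (hxB' : x ∈ B') : B = B' := by
  by_contra hne
  exact disjoint_left.1 (hP B hB B' hB' hne) hxB hxB'

section Saturation

variable {α β : Type*} [Fintype α] [DecidableEq β] {f : α → β}

theorem image_filter_mem_of_surjective (hf : Surjective f) (Q : Finset β) :
    ({x | f x ∈ Q} : Finset α).image f = Q := by
  ext y
  obtain ⟨x, rfl⟩ := hf y
  simp only [mem_image, mem_filter, mem_univ, true_and]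
  exact ⟨fun ⟨x', hx', hxx'⟩ => hxx' ▸ hx', fun hx => ⟨x, hx, rfl⟩⟩

theorem filter_mem_image_of_saturated {B : Finset α}
    (hB : ∀ x ∈ B, ∀ y, f x = f y → y ∈ B) :
    ({x | f x ∈ B.image f} : Finset α) = B := by
  ext y
  simp only [mem_filter, mem_univ, true_and, mem_image]
  exact ⟨fun ⟨x, hx, hxy⟩ => hB x hx y hxy, fun hy => ⟨y, hy, rfl⟩⟩

end Saturation

section Partitions

variable {α β : Type*} [Fintype α] [DecidableEq α]

variable (α) in
def partitionsOf (ℓ : ℕ) : Finset (Finset (Finset α)) :=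
  univ.filter fun P => P.card = ℓ ∧ (∀ B ∈ P, B.Nonempty) ∧
    (∀ B ∈ P, ∀ B' ∈ P, B ≠ B' → Disjoint B B') ∧ P.sup id = univ

theorem mem_partitionsOf {ℓ : ℕ} {P : Finset (Finset α)} :
    P ∈ partitionsOf α ℓ ↔ P.card = ℓ ∧ (∀ B ∈ P, B.Nonempty) ∧
      (∀ B ∈ P, ∀ B' ∈ P, B ≠ B' → Disjoint B B') ∧ ∀ x, ∃ B ∈ P, x ∈ B := by
  simp [partitionsOf, eq_univ_iff_forall, mem_sup]

theorem partitionsInto_eq_partitionsOf (n ℓ : ℕ) :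
    partitionsInto n ℓ = partitionsOf (Fin n) ℓ := by
  ext P
  simp [partitionsInto, partitionsOf]

variable [Fintype β] [DecidableEq β] {f : α → β}

theorem image_mem_partitionsOf {ℓ : ℕ} {D : Finset (Finset α)} (hf : Surjective f)
    (hD : D ∈ partitionsOf α ℓ)
    (hsat : ∀ B ∈ D, ∀ x ∈ B, ∀ y, f x = f y → y ∈ B) :
    D.image (image f) ∈ partitionsOf β ℓ := by
  obtain ⟨hcard, hne, hdisj, hcover⟩ := mem_partitionsOf.1 hD
  have hinj : Set.InjOn (image f) D := fun B hB B' hB' h => by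
    rw [← filter_mem_image_of_saturated (hsat B hB), h,
      filter_mem_image_of_saturated (hsat B' hB')]
  refine mem_partitionsOf.2 ⟨(card_image_of_injOn hinj).trans hcard, ?_, ?_, fun y => ?_⟩
  · simp only [mem_image, forall_exists_index, and_imp, forall_apply_eq_imp_iff₂]
    exact fun B hB => (hne B hB).image f
  · simp only [mem_image, forall_exists_index, and_imp, forall_apply_eq_imp_iff₂]
    intro B hB B' hB' hBB'
    refine disjoint_left.2 ?_
    simp only [mem_image, forall_exists_index, and_imp, not_exists, not_and]
    rintro _ x hx rfl y hy hxy
    exact hBB' (by rw [eq_of_mem_of_mem_of_pairwise_disjoint hdisj hB hB' hx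
      (hsat B' hB' y hy x hxy)])
  · obtain ⟨x, rfl⟩ := hf y
    obtain ⟨B, hB, hx⟩ := hcover x
    exact ⟨B.image f, mem_image_of_mem _ hB, mem_image_of_mem _ hx⟩

theorem image_filter_mem_mem_partitionsOf {ℓ : ℕ} {P : Finset (Finset β)} (hf : Surjective f)
    (hP : P ∈ partitionsOf β ℓ) :
    P.image (fun Q => ({x | f x ∈ Q} : Finset α)) ∈ partitionsOf α ℓ := by
  obtain ⟨hcard, hne, hdisj, hcover⟩ := mem_partitionsOf.1 hP
  have hinj : Set.InjOn (fun Q => ({x | f x ∈ Q} : Finset α)) P := fun Q _ Q' _ h => by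
    rw [← image_filter_mem_of_surjective hf Q, ← image_filter_mem_of_surjective hf Q']
    exact congrArg (image f) h
  refine mem_partitionsOf.2 ⟨(card_image_of_injOn hinj).trans hcard, ?_, ?_, fun x => ?_⟩
  · simp only [mem_image, forall_exists_index, and_imp, forall_apply_eq_imp_iff₂]
    intro Q hQ
    obtain ⟨y, hy⟩ := hne Q hQ
    obtain ⟨x, rfl⟩ := hf y
    exact ⟨x, by simpa using hy⟩
  · simp only [mem_image, forall_exists_index, and_imp, forall_apply_eq_imp_iff₂]
    intro Q hQ Q' hQ' hQQ'
    exact disjoint_filter.2 fun x _ hxQ hxQ' =>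
      disjoint_left.1 (hdisj Q hQ Q' hQ' fun h => hQQ' (h ▸ rfl)) hxQ hxQ'
  · obtain ⟨Q, hQ, hx⟩ := hcover (f x)
    exact ⟨_, mem_image_of_mem _ hQ, by simpa using hx⟩

theorem card_filter_saturated_partitionsOf (hf : Surjective f) (ℓ : ℕ) :
    #{D ∈ partitionsOf α ℓ | ∀ B ∈ D, ∀ x ∈ B, ∀ y, f x = f y → y ∈ B} =
      #(partitionsOf β ℓ) := by
  refine card_nbij' (fun D => D.image (image f)) 
    (fun P => P.image fun Q => ({x | f x ∈ Q} : Finset α))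
    (fun D hD => ?_) (fun P hP => ?_) (fun D hD => ?_) (fun P _ => ?_)
  · obtain ⟨hD, hsat⟩ := mem_filter.1 hD
    exact image_mem_partitionsOf hf hD hsat
  · refine mem_filter.2 ⟨image_filter_mem_mem_partitionsOf hf hP, ?_⟩
    simp only [mem_image, forall_exists_index, and_imp, forall_apply_eq_imp_iff₂]
    intro Q _ x hx y hxy
    simpa [← hxy] using hx
  · obtain ⟨-, hsat⟩ := mem_filter.1 (mem_coe.1 hD)
    simp only [image_image]
    exact (image_congr fun B hB => filter_mem_image_of_saturated (hsat B hB)).trans image_id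
  · simp only [image_image]
    exact (image_congr fun Q _ => image_filter_mem_of_surjective hf Q).trans image_id

theorem card_partitionsOf (ℓ : ℕ) :
    #(partitionsOf α ℓ) = stirling2 (Fintype.card α) ℓ := by
  let e := Fintype.equivFin α
  rw [stirling2, partitionsInto_eq_partitionsOf,
    ← card_filter_saturated_partitionsOf e.surjective, filter_true_of_mem]
  intro D _ B _ x hx y hxy
  rwa [← e.injective hxy]

end Partitions

section Contraction

variable {α ι : Type*} {T : ι → Finset α}

open Classical in
noncomputable def contract (T : ι → Finset α) (x : α) : {x : α // ∀ i, x ∉ T i} ⊕ ι :=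
  if hx : ∃ i, x ∈ T i then .inr hx.choose else .inl ⟨x, not_exists.1 hx⟩

theorem contract_eq_inl_iff {x : α} {y : {x : α // ∀ i, x ∉ T i}} :
    contract T x = .inl y ↔ x = y := by
  rw [contract]
  split_ifs with hx
  · simp only [false_iff]
    rintro rfl
    exact y.2 _ hx.choose_spec
  · rw [Sum.inl.injEq, Subtype.ext_iff]

theorem contract_eq_inr_iff (hT : Pairwise (Disjoint on T)) {x : α} {i : ι} :
    contract T x = .inr i ↔ x ∈ T i := by
  rw [contract]
  split_ifs with hx
  · rw [Sum.inr.injEq]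
    refine ⟨fun h => h ▸ hx.choose_spec, fun hi => ?_⟩
    exact hT.eq (not_disjoint_iff.2 ⟨x, hx.choose_spec, hi⟩)
  · simpa only [reduceCtorEq, false_iff] using fun hi => hx ⟨i, hi⟩

theorem contract_eq_contract_iff (hT : Pairwise (Disjoint on T)) {x y : α} :
    contract T x = contract T y ↔ x = y ∨ ∃ i, x ∈ T i ∧ y ∈ T i := by
  rcases hy : contract T y with y' | i
  · rw [contract_eq_inl_iff] at hy ⊢
    subst hy
    simp [y'.2]
  · rw [contract_eq_inr_iff hT] at hy ⊢
    refine ⟨fun hx => .inr ⟨i, hx, hy⟩, ?_⟩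
    rintro (rfl | ⟨j, hxj, hyj⟩)
    · exact hy
    · rwa [hT.eq (not_disjoint_iff.2 ⟨y, hy, hyj⟩)]

theorem contract_surjective (hT : Pairwise (Disjoint on T)) (hne : ∀ i, (T i).Nonempty) :
    Surjective (contract T) := by
  rintro (⟨x, hx⟩ | i)
  · exact ⟨x, contract_eq_inl_iff.2 rfl⟩
  · obtain ⟨x, hx⟩ := hne i
    exact ⟨x, (contract_eq_inr_iff hT).2 hx⟩

variable [Fintype α] [DecidableEq α]

theorem forall_exists_subset_iff_saturated (hT : Pairwise (Disjoint on T))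
    (hne : ∀ i, (T i).Nonempty) {ℓ : ℕ} {D : Finset (Finset α)}
    (hD : D ∈ partitionsOf α ℓ) :
    (∀ i, ∃ B ∈ D, T i ⊆ B) ↔
      ∀ B ∈ D, ∀ x ∈ B, ∀ y, contract T x = contract T y → y ∈ B := by
  obtain ⟨-, -, hdisj, hcover⟩ := mem_partitionsOf.1 hD
  constructor
  · intro habs B hB x hx y hxy
    rcases (contract_eq_contract_iff hT).1 hxy with rfl | ⟨i, hxi, hyi⟩
    · exact hx
    · obtain ⟨B', hB', hiB'⟩ := habs i
      rw [eq_of_mem_of_mem_of_pairwise_disjoint hdisj hB hB' hx (hiB' hxi)]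
      exact hiB' hyi
  · intro hsat i
    obtain ⟨x, hx⟩ := hne i
    obtain ⟨B, hB, hxB⟩ := hcover x
    refine ⟨B, hB, fun y hy => hsat B hB x hxB y ?_⟩
    rw [(contract_eq_inr_iff hT).2 hx, (contract_eq_inr_iff hT).2 hy]

variable [Fintype ι]

theorem card_contract_codomain (hT : Pairwise (Disjoint on T)) :
    Fintype.card ({x : α // ∀ i, x ∉ T i} ⊕ ι) =
      Fintype.card α + Fintype.card ι - ∑ i, #(T i) := by
  have hfilter : ({x | ∀ i, x ∉ T i} : Finset α) = univ \ univ.biUnion T := by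
    ext x
    simp
  have hunion : #(univ.biUnion T) = ∑ i, #(T i) :=
    card_biUnion fun i _ j _ hij => hT hij
  have hle : #(univ.biUnion T) ≤ Fintype.card α := card_le_univ _
  rw [Fintype.card_sum, Fintype.card_subtype, hfilter, card_sdiff_of_subset (subset_univ _),
    card_univ]
  omega

theorem card_filter_partitionsOf_absorbing (hT : Pairwise (Disjoint on T))
    (hne : ∀ i, (T i).Nonempty) (ℓ : ℕ) :
    #{D ∈ partitionsOf α ℓ | ∀ i, ∃ B ∈ D, T i ⊆ B} =
      stirling2 (Fintype.card α + Fintype.card ι - ∑ i, #(T i)) ℓ := by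
  classical
  rw [filter_congr fun D hD => forall_exists_subset_iff_saturated hT hne hD,
    card_filter_saturated_partitionsOf (contract_surjective hT hne), card_partitionsOf,
    card_contract_codomain hT]

end Contraction

open Classical in
theorem coefficient_computation_general (n h : ℕ) (𝒞 : Fin h → Finset (Finset (Fin n)))
    (hdisj : ∀ m m', m ≠ m' → ∀ I ∈ 𝒞 m, ∀ J ∈ 𝒞 m', Disjoint I J)
    (hne : ∀ m, (((𝒞 m).sup id : Finset (Fin n))).Nonempty) :
    ∑ ℓ ∈ Finset.Icc 1 n, (-1 : ℤ) ^ (ℓ - 1) * (Nat.factorial (ℓ - 1) : ℤ) *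
        (((partitionsInto n ℓ).filter
            (fun D => ∀ m, ∃ B ∈ D, (𝒞 m).sup id ⊆ B)).card : ℤ) =
      ∑ ℓ ∈ Finset.Icc 1 n, (-1 : ℤ) ^ (ℓ - 1) * (Nat.factorial (ℓ - 1) : ℤ) *
        (stirling2 (n + h - ∑ m, ((𝒞 m).sup id : Finset (Fin n)).card) ℓ : ℤ) := by
  have hT : Pairwise (Disjoint on fun m => (𝒞 m).sup id) := fun m m' hmm' =>
    Finset.disjoint_sup_left.2 fun I hI =>
      Finset.disjoint_sup_right.2 fun J hJ => hdisj m m' hmm' I hI J hJ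
  refine sum_congr rfl fun ℓ _ => ?_
  have hcount := card_filter_partitionsOf_absorbing hT hne ℓ
  rw [Fintype.card_fin, Fintype.card_fin] at hcount
  rw [partitionsInto_eq_partitionsOf, ← hcount]
  -- the two filters differ only in their decidability instances
  congr 3
  ext D
  simp only [mem_filter]

open Classical in
/-- Computation of the coefficient `a(I̲)`: for a family decomposed into `h`
connected components `𝒞_1, …, 𝒞_h` with pairwise disjoint supports
`C̃_m = ∪_{I ∈ 𝒞_m} I` of cardinalities `c_m`, the alternating sum over
partitions of `N` whose atoms absorb each support equals the corresponding
alternating sum of Stirling numbers `d^ℓ_{n+h-(c_1+⋯+c_h)}`. -/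
theorem coefficient_computation (n h : ℕ) (𝒞 : Fin h → Finset (Finset (Fin n)))
    (hconn : ∀ m, FamConnected (𝒞 m))
    (hdisj : ∀ m m', m ≠ m' → ∀ I ∈ 𝒞 m, ∀ J ∈ 𝒞 m', Disjoint I J)
    (hne : ∀ m, (((𝒞 m).sup id : Finset (Fin n))).Nonempty) :
    ∑ ℓ ∈ Finset.Icc 1 n, (-1 : ℤ) ^ (ℓ - 1) * (Nat.factorial (ℓ - 1) : ℤ) *
        (((partitionsInto n ℓ).filter
            (fun D => ∀ m, ∃ B ∈ D, (𝒞 m).sup id ⊆ B)).card : ℤ) =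
      ∑ ℓ ∈ Finset.Icc 1 n, (-1 : ℤ) ^ (ℓ - 1) * (Nat.factorial (ℓ - 1) : ℤ) *
        (stirling2 (n + h - ∑ m, ((𝒞 m).sup id : Finset (Fin n)).card) ℓ : ℤ) :=
  coefficient_computation_general n h 𝒞 hdisj hne
end

section
/- Let Λ_{i_0}, Λ_{i_1}, …, Λ_{i_k} be pairwise disjoint finite subsets of ℤ^d (k ≥ 1), and let T(I) be the minimal size 𝕋({x_0,…,x_k}) over all choices x_h ∈ Λ_{i_h} of the Steiner tree number in the graph (ℤ^d, 𝔼) with sup-distance edges. Then T(I) ≥ (1/2) · min over permutations π of {0,…,k} fixing 0 of ∑_{l=1}^{k} d(Λ_{i_{π(l-1)}}, Λ_{i_{π(l)}}), where d(A,B) is the sup-distance between sets. -/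
/-- The sup-distance `d(x,y) = max_i |x_i - y_i|` on `ℤ^d`. -/
def supDist {d : ℕ} (x y : Fin d → ℤ) : ℕ :=
  Finset.univ.sup fun i => (x i - y i).natAbs

/-- Steiner tree number of a finite set `X ⊂ ℤ^d`: the minimal number of edges
of a connected subgraph of the lattice graph (with sup-distance-1 edges)
whose vertex set contains `X`. -/
noncomputable def steiner {d : ℕ} (X : Finset (Fin d → ℤ)) : ℕ :=
  sInf {m : ℕ |
    ∃ (V : Finset (Fin d → ℤ)) (E : Finset (Sym2 (Fin d → ℤ))),
      (∀ e ∈ E, ∃ u v, e = s(u, v) ∧ u ∈ V ∧ v ∈ V ∧ supDist u v = 1) ∧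
      (∀ a ∈ V, ∀ b ∈ V, Relation.ReflTransGen (fun u v => s(u, v) ∈ E) a b) ∧
      X ⊆ V ∧ E.card = m}

/-- Sup-distance between two finite nonempty sets. -/
noncomputable def setDist {d : ℕ} (A B : Finset (Fin d → ℤ)) : ℕ :=
  sInf {m : ℕ | ∃ a ∈ A, ∃ b ∈ B, supDist a b = m}

/-!
Fix points `x h ∈ Λ h` realising `T(I)` and a minimal connected lattice graph `(V, E)` through
them. A closed walk from `x 0` through every vertex of this graph uses each edge at most twice,
so it has length at most `2 |E|`. Visit the points `x h` in the order of their first appearance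
on the walk: since lattice edges have sup-length one, consecutive points are at sup-distance at
most the number of steps between them, so this order (which starts with `0`) costs at most the
length of the walk.
-/

open Finset SimpleGraph

section SupDist

variable {d : ℕ}

lemma natAbs_sub_le_supDist (x y : Fin d → ℤ) (i : Fin d) : (x i - y i).natAbs ≤ supDist x y :=
  le_sup (f := fun i => (x i - y i).natAbs) (mem_univ i)

lemma supDist_le_iff {x y : Fin d → ℤ} {n : ℕ} :
    supDist x y ≤ n ↔ ∀ i, (x i - y i).natAbs ≤ n := by
  simp [supDist]

lemma supDist_self (x : Fin d → ℤ) : supDist x x = 0 := by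
  simp [supDist]

lemma supDist_comm (x y : Fin d → ℤ) : supDist x y = supDist y x := by
  unfold supDist
  simp_rw [← Int.natAbs_neg (x _ - y _), neg_sub]

lemma eq_of_supDist_eq_zero {x y : Fin d → ℤ} (h : supDist x y = 0) : x = y :=
  funext fun i => by have := supDist_le_iff.1 h.le i; omega

lemma supDist_triangle (x y z : Fin d → ℤ) : supDist x z ≤ supDist x y + supDist y z :=
  supDist_le_iff.2 fun i => by
    have := natAbs_sub_le_supDist x y i
    have := natAbs_sub_le_supDist y z i
    omega

lemma setDist_le_supDist {A B : Finset (Fin d → ℤ)} {a b : Fin d → ℤ} (ha : a ∈ A) (hb : b ∈ B) :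
    setDist A B ≤ supDist a b :=
  Nat.sInf_le ⟨a, ha, b, hb, rfl⟩

end SupDist

def latticeGraph (d : ℕ) : SimpleGraph (Fin d → ℤ) where
  Adj u v := supDist u v = 1
  symm := ⟨fun u v h => (supDist_comm v u).trans h⟩
  loopless := ⟨fun u h => by simp [supDist_self] at h⟩

section LatticeGraph

variable {d : ℕ}

@[simp]
lemma latticeGraph_adj {u v : Fin d → ℤ} : (latticeGraph d).Adj u v ↔ supDist u v = 1 :=
  Iff.rfl

def stepToward (p q : Fin d → ℤ) : Fin d → ℤ := fun i => p i + (q i - p i).sign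

lemma latticeGraph_adj_stepToward {p q : Fin d → ℤ} (h : p ≠ q) :
    (latticeGraph d).Adj p (stepToward p q) := by
  have hle : supDist p (stepToward p q) ≤ 1 := supDist_le_iff.2 fun i => by
    simp only [stepToward, sub_add_cancel_left, Int.natAbs_neg, Int.natAbs_sign]
    split <;> omega
  have hne : supDist p (stepToward p q) ≠ 0 := fun h0 => by
    obtain ⟨i, hi⟩ := Function.ne_iff.1 h
    have := congrFun (eq_of_supDist_eq_zero h0) i
    simp [stepToward] at this
    omega
  rw [latticeGraph_adj]
  omega

lemma supDist_stepToward_le (p q : Fin d → ℤ) :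
    supDist (stepToward p q) q ≤ supDist p q - 1 := supDist_le_iff.2 fun i => by
  have := natAbs_sub_le_supDist p q i
  rcases lt_trichotomy (q i - p i) 0 with hi | hi | hi
  · rw [stepToward, Int.sign_eq_neg_one_of_neg hi]; omega
  · simp [stepToward, show q i = p i by omega]
  · rw [stepToward, Int.sign_eq_one_of_pos hi]; omega

lemma latticeGraph_reachable (p q : Fin d → ℤ) : (latticeGraph d).Reachable p q := by
  suffices ∀ n p, supDist p q ≤ n → (latticeGraph d).Reachable p q from this _ p le_rfl
  intro n
  induction n with
  | zero => exact fun p h => eq_of_supDist_eq_zero (Nat.le_zero.1 h) ▸ .rfl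
  | succ n ih =>
    intro p hp
    by_cases hpq : p = q
    · exact hpq ▸ .rfl
    · exact (latticeGraph_adj_stepToward hpq).reachable.trans
        (ih _ ((supDist_stepToward_le p q).trans (by omega)))

lemma supDist_getVert_le {G : SimpleGraph (Fin d → ℤ)} (hG : G ≤ latticeGraph d) {u v : Fin d → ℤ}
    (p : G.Walk u v) {m n : ℕ} (hmn : m ≤ n) : supDist (p.getVert m) (p.getVert n) ≤ n - m := by
  obtain ⟨n, rfl⟩ := Nat.exists_eq_add_of_le hmn
  rw [Nat.add_sub_cancel_left]
  induction n with
  | zero => simp [supDist_self]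
  | succ n ih =>
    have hstep : supDist (p.getVert (m + n)) (p.getVert (m + n + 1)) ≤ 1 := by
      by_cases hlt : m + n < p.length
      · exact (latticeGraph_adj.1 (hG (p.adj_getVert_succ hlt))).le
      · rw [p.getVert_of_length_le (by omega), p.getVert_of_length_le (by omega), supDist_self]
        exact zero_le_one
    calc supDist (p.getVert m) (p.getVert (m + (n + 1)))
        ≤ supDist (p.getVert m) (p.getVert (m + n)) +
            supDist (p.getVert (m + n)) (p.getVert (m + n + 1)) := supDist_triangle _ _ _
      _ ≤ n + 1 := add_le_add (ih (by omega)) hstep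

end LatticeGraph

section Tour

open scoped Classical

variable {α : Type*}

lemma reachable_fromEdgeSet_erase_or {E : Finset (Sym2 α)} {a c v : α}
    (h : (fromEdgeSet (E : Set (Sym2 α))).Reachable a v) :
    (fromEdgeSet (↑(E.erase s(a, c)) : Set (Sym2 α))).Reachable a v ∨
      (fromEdgeSet (↑(E.erase s(a, c)) : Set (Sym2 α))).Reachable c v := by
  rw [reachable_iff_reflTransGen] at h
  induction h with
  | refl => exact .inl .rfl
  | @tail w v _ hwv ih =>
    rw [fromEdgeSet_adj] at hwv
    by_cases he : s(w, v) = s(a, c)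
    · rcases Sym2.eq_iff.1 he with ⟨-, rfl⟩ | ⟨-, rfl⟩
      exacts [.inr .rfl, .inl .rfl]
    · have hadj : (fromEdgeSet (↑(E.erase s(a, c)) : Set (Sym2 α))).Adj w v := by
        simpa [fromEdgeSet_adj, he] using hwv
      exact ih.imp (·.trans hadj.reachable) (·.trans hadj.reachable)

noncomputable def componentEdges (F : Finset (Sym2 α)) (a : α) : Finset (Sym2 α) :=
  F.filter fun e => ∃ x ∈ e, (fromEdgeSet (F : Set (Sym2 α))).Reachable a x

lemma mem_componentEdges {F : Finset (Sym2 α)} {a : α} {e : Sym2 α} :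
    e ∈ componentEdges F a ↔ e ∈ F ∧ ∃ x ∈ e, (fromEdgeSet (F : Set (Sym2 α))).Reachable a x :=
  mem_filter

lemma componentEdges_subset (F : Finset (Sym2 α)) (a : α) : componentEdges F a ⊆ F :=
  filter_subset _ _

lemma reachable_fromEdgeSet_componentEdges {F : Finset (Sym2 α)} {a v : α}
    (h : (fromEdgeSet (F : Set (Sym2 α))).Reachable a v) :
    (fromEdgeSet (componentEdges F a : Set (Sym2 α))).Reachable a v := by
  rw [reachable_iff_reflTransGen] at h ⊢
  induction h with
  | refl => exact .refl
  | @tail w v hw hwv ih =>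
    rw [fromEdgeSet_adj] at hwv
    refine ih.tail ?_
    rw [fromEdgeSet_adj, mem_coe, mem_componentEdges]
    exact ⟨⟨hwv.1, w, Sym2.mem_mk_left w v, (reachable_iff_reflTransGen _ _).2 hw⟩, hwv.2⟩

lemma reachable_fromEdgeSet_or_sdiff_componentEdges {F : Finset (Sym2 α)} {a c v : α}
    (h : (fromEdgeSet (F : Set (Sym2 α))).Reachable c v) :
    (fromEdgeSet (F : Set (Sym2 α))).Reachable a v ∨
      (fromEdgeSet (↑(F \ componentEdges F a) : Set (Sym2 α))).Reachable c v := by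
  rw [reachable_iff_reflTransGen] at h
  induction h with
  | refl => exact .inr .rfl
  | @tail w v _ hwv ih =>
    by_cases hv : (fromEdgeSet (F : Set (Sym2 α))).Reachable a v
    · exact .inl hv
    · have hw : ¬ (fromEdgeSet (F : Set (Sym2 α))).Reachable a w :=
        fun hw => hv (hw.trans hwv.reachable)
      refine .inr (ih.resolve_left hw |>.trans (Adj.reachable ?_))
      rw [fromEdgeSet_adj] at hwv ⊢
      rw [mem_coe, mem_sdiff, mem_componentEdges]
      refine ⟨⟨hwv.1, fun ⟨_, x, hx, hax⟩ => ?_⟩, hwv.2⟩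
      rcases Sym2.mem_iff.1 hx with rfl | rfl <;> contradiction

/-- Remove an edge `s(a, c)`; walk around the component of `a`, cross to `c`, walk around the
rest of the component of `c`, and cross back: every edge is used at most twice. -/
theorem exists_closed_walk_length_le (E : Finset (Sym2 α)) (a : α) :
    ∃ p : (fromEdgeSet (E : Set (Sym2 α))).Walk a a,
      (∀ v, (fromEdgeSet (E : Set (Sym2 α))).Reachable a v → v ∈ p.support) ∧
        p.length ≤ 2 * #E := by
  induction hE : #E using Nat.strong_induction_on generalizing E a with
  | _ n ih =>
  by_cases hc : ∃ c, (fromEdgeSet (E : Set (Sym2 α))).Adj a c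
  · obtain ⟨c, hac⟩ := hc
    set F := E.erase s(a, c)
    have hF : #F + 1 = n := by
      rw [← hE]; exact card_erase_add_one ((fromEdgeSet_adj _).1 hac).1
    have hsplit := card_sdiff_add_card_eq_card (componentEdges_subset F a)
    obtain ⟨pa, hpa, hla⟩ := ih _ (by omega) (componentEdges F a) a rfl
    obtain ⟨pc, hpc, hlc⟩ := ih _ (by omega) (F \ componentEdges F a) c rfl
    have hFE : F ⊆ E := erase_subset _ _
    let pa' := pa.mapLe (fromEdgeSet_mono (coe_subset.2 ((componentEdges_subset F a).trans hFE)))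
    let pc' := pc.mapLe (fromEdgeSet_mono (coe_subset.2 (sdiff_subset.trans hFE)))
    refine ⟨pa'.append (.cons hac (pc'.append (.cons hac.symm .nil))), fun v hv => ?_, ?_⟩
    · simp only [Walk.mem_support_append_iff, Walk.support_cons, List.mem_cons, pa', pc',
        Walk.support_mapLe_eq_support, Walk.support_nil]
      rcases reachable_fromEdgeSet_erase_or hv with hv | hv
      · exact .inl (hpa v (reachable_fromEdgeSet_componentEdges hv))
      · rcases reachable_fromEdgeSet_or_sdiff_componentEdges (a := a) hv with hv | hv
        · exact .inl (hpa v (reachable_fromEdgeSet_componentEdges hv))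
        · exact .inr (.inr (.inl (hpc v hv)))
    · simp only [Walk.length_append, Walk.length_cons, Walk.length_nil, pa', pc', Walk.length_mapLe]
      omega
  · refine ⟨.nil, fun v hv => ?_, by simp⟩
    rcases Relation.ReflTransGen.cases_head ((reachable_iff_reflTransGen _ _).1 hv) with
      rfl | ⟨c, hac, -⟩
    exacts [Walk.start_mem_support _, absurd ⟨c, hac⟩ hc]

end Tour

lemma sum_succ_tsub_castSucc_of_monotone {k : ℕ} {g : Fin (k + 1) → ℕ} (hg : Monotone g) :
    ∑ l : Fin k, (g l.succ - g l.castSucc) = g (Fin.last k) - g 0 := by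
  induction k with
  | zero => simp
  | succ k ih =>
    have hcast := ih (hg.comp Fin.strictMono_castSucc.monotone)
    simp only [Function.comp_apply, Fin.castSucc_zero] at hcast
    have h0 := hg (Fin.zero_le (Fin.last k).castSucc)
    have hlast := hg (Fin.castSucc_le_succ (Fin.last k))
    rw [Fin.sum_univ_castSucc]
    simp only [Fin.succ_castSucc, hcast, Fin.succ_last, Nat.succ_eq_add_one] at hlast ⊢
    omega

-- `Tuple.sort` is stable, so it keeps `0` in front of the entries tied with it.
lemma Tuple.sort_zero_of_forall_le {n : ℕ} {α : Type*} [LinearOrder α] {f : Fin (n + 1) → α}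
    (h0 : ∀ i, f 0 ≤ f i) : Tuple.sort f 0 = 0 := by
  set σ := Tuple.sort f
  by_contra hne
  have hpos : 0 < σ.symm 0 := by
    refine Fin.pos_iff_ne_zero.2 fun h => hne ?_
    simpa using (congrArg σ h).symm
  have hle : f (σ 0) ≤ f (σ (σ.symm 0)) := Tuple.monotone_sort f (Fin.zero_le _)
  rw [Equiv.apply_symm_apply] at hle
  have hlt : σ 0 < σ (σ.symm 0) :=
    (Tuple.eq_sort_iff.1 rfl).2 0 _ hpos
      (by rw [Equiv.apply_symm_apply]; exact le_antisymm hle (h0 _))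
  rw [Equiv.apply_symm_apply] at hlt
  exact Fin.not_lt_zero _ hlt

lemma exists_perm_sum_le_of_le_tsub {k N : ℕ} (f : Fin (k + 1) → ℕ)
    (c : Fin (k + 1) → Fin (k + 1) → ℕ) (h0 : ∀ i, f 0 ≤ f i) (hN : ∀ i, f i ≤ N)
    (hc : ∀ i j, f i ≤ f j → c i j ≤ f j - f i) :
    ∃ π : Equiv.Perm (Fin (k + 1)), π 0 = 0 ∧ ∑ l : Fin k, c (π l.castSucc) (π l.succ) ≤ N := by
  set π := Tuple.sort f
  have hmono := Tuple.monotone_sort f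
  refine ⟨π, Tuple.sort_zero_of_forall_le h0, ?_⟩
  calc ∑ l : Fin k, c (π l.castSucc) (π l.succ)
      ≤ ∑ l : Fin k, (f (π l.succ) - f (π l.castSucc)) :=
        sum_le_sum fun l _ => hc _ _ (hmono (Fin.castSucc_le_succ l))
    _ = f (π (Fin.last k)) - f (π 0) := sum_succ_tsub_castSucc_of_monotone hmono
    _ ≤ N := (Nat.sub_le _ _).trans (hN _)

-- Order the points by their first visit along `p`.
lemma exists_perm_sum_supDist_le_length {d k : ℕ} {G : SimpleGraph (Fin d → ℤ)}
    (hG : G ≤ latticeGraph d) {a b : Fin d → ℤ} (p : G.Walk a b) (x : Fin (k + 1) → Fin d → ℤ)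
    (hx0 : x 0 = a) (hx : ∀ h, x h ∈ p.support) :
    ∃ π : Equiv.Perm (Fin (k + 1)), π 0 = 0 ∧
      ∑ l : Fin k, supDist (x (π l.castSucc)) (x (π l.succ)) ≤ p.length := by
  classical
  have hpos h : ∃ n, p.getVert n = x h ∧ n ≤ p.length :=
    Walk.mem_support_iff_exists_getVert.1 (hx h)
  let f h := Nat.find (hpos h)
  have hf h : p.getVert (f h) = x h ∧ f h ≤ p.length := Nat.find_spec (hpos h)
  have hf0 : f 0 = 0 := (Nat.find_eq_zero _).2 ⟨by rw [hx0, Walk.getVert_zero], Nat.zero_le _⟩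
  refine exists_perm_sum_le_of_le_tsub f (fun i j => supDist (x i) (x j))
    (fun i => by rw [hf0]; exact Nat.zero_le _) (fun i => (hf i).2) fun i j hij => ?_
  rw [← (hf i).1, ← (hf j).1]
  exact supDist_getVert_le hG p hij

lemma reflTransGen_iff_reachable_fromEdgeSet {α : Type*} {E : Set (Sym2 α)} {a b : α} :
    Relation.ReflTransGen (fun u v => s(u, v) ∈ E) a b ↔ (fromEdgeSet E).Reachable a b := by
  rw [reachable_iff_reflTransGen]
  refine ⟨fun h => ?_, fun h =>
    Relation.ReflTransGen.mono (fun u v huv => ((fromEdgeSet_adj E).1 huv).1) a b h⟩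
  rw [← Relation.reflTransGen_reflGen]
  refine Relation.ReflTransGen.mono (fun u v huv => ?_) a b h
  by_cases huv' : u = v
  exacts [huv' ▸ .refl, .single ((fromEdgeSet_adj E).2 ⟨huv, huv'⟩)]

section Steiner

variable {d : ℕ}

lemma exists_connected_lattice_subgraph (X : Finset (Fin d → ℤ)) :
    ∃ (V : Finset (Fin d → ℤ)) (E : Finset (Sym2 (Fin d → ℤ))),
      (∀ e ∈ E, ∃ u v, e = s(u, v) ∧ u ∈ V ∧ v ∈ V ∧ supDist u v = 1) ∧
      (∀ a ∈ V, ∀ b ∈ V, Relation.ReflTransGen (fun u v => s(u, v) ∈ E) a b) ∧ X ⊆ V := by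
  classical
  let W x : (latticeGraph d).Walk 0 x := (latticeGraph_reachable 0 x).some
  let V := insert 0 (X.biUnion fun x => (W x).support.toFinset)
  let E := X.biUnion fun x => (W x).edges.toFinset
  have hreach : ∀ v ∈ V, (fromEdgeSet (E : Set (Sym2 (Fin d → ℤ)))).Reachable 0 v := by
    simp only [V, mem_insert, mem_biUnion, List.mem_toFinset]
    rintro v (rfl | ⟨x, hx, hv⟩)
    · exact .rfl
    refine ⟨((W x).takeUntil v hv).transfer _ fun e he => ?_⟩
    have he' := (W x).edges_takeUntil_subset_edges hv he
    rw [edgeSet_fromEdgeSet]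
    exact ⟨mem_biUnion.2 ⟨x, hx, List.mem_toFinset.2 he'⟩,
      (latticeGraph d).not_isDiag_of_mem_edgeSet ((W x).edges_subset_edgeSet he')⟩
  refine ⟨V, E, fun e he => ?_, fun a ha b hb => ?_, fun x hx => ?_⟩
  · obtain ⟨x, hx, he⟩ := mem_biUnion.1 he
    rw [List.mem_toFinset] at he
    induction e using Sym2.ind with
    | _ u v =>
      refine ⟨u, v, rfl, ?_, ?_, (W x).edges_subset_edgeSet he⟩ <;>
        refine mem_insert_of_mem (mem_biUnion.2 ⟨x, hx, List.mem_toFinset.2 ?_⟩)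
      exacts [(W x).fst_mem_support_of_mem_edges he, (W x).snd_mem_support_of_mem_edges he]
  · exact reflTransGen_iff_reachable_fromEdgeSet.2 ((hreach a ha).symm.trans (hreach b hb))
  · exact mem_insert_of_mem (mem_biUnion.2 ⟨x, hx, List.mem_toFinset.2 (W x).end_mem_support⟩)

lemma exists_steiner_graph (X : Finset (Fin d → ℤ)) :
    ∃ (V : Finset (Fin d → ℤ)) (E : Finset (Sym2 (Fin d → ℤ))),
      (∀ e ∈ E, ∃ u v, e = s(u, v) ∧ u ∈ V ∧ v ∈ V ∧ supDist u v = 1) ∧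
      (∀ a ∈ V, ∀ b ∈ V, Relation.ReflTransGen (fun u v => s(u, v) ∈ E) a b) ∧
      X ⊆ V ∧ #E = steiner X := by
  obtain ⟨V, E, hE, hconn, hX⟩ := exists_connected_lattice_subgraph X
  exact Nat.sInf_mem (s := {m | ∃ (V : Finset (Fin d → ℤ)) (E : Finset (Sym2 (Fin d → ℤ))),
    (∀ e ∈ E, ∃ u v, e = s(u, v) ∧ u ∈ V ∧ v ∈ V ∧ supDist u v = 1) ∧
    (∀ a ∈ V, ∀ b ∈ V, Relation.ReflTransGen (fun u v => s(u, v) ∈ E) a b) ∧ X ⊆ V ∧ #E = m})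
    ⟨#E, V, E, hE, hconn, hX, rfl⟩

lemma exists_perm_sum_supDist_le_two_mul_steiner {k : ℕ} (x : Fin (k + 1) → Fin d → ℤ) :
    ∃ π : Equiv.Perm (Fin (k + 1)), π 0 = 0 ∧
      ∑ l : Fin k, supDist (x (π l.castSucc)) (x (π l.succ)) ≤ 2 * steiner (image x univ) := by
  obtain ⟨V, E, hE, hconn, hXV, hcard⟩ := exists_steiner_graph (image x univ)
  have hG : fromEdgeSet (E : Set (Sym2 (Fin d → ℤ))) ≤ latticeGraph d := fun u v huv => by
    obtain ⟨u', v', huv', -, -, h1⟩ := hE _ ((fromEdgeSet_adj _).1 huv).1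
    rcases Sym2.eq_iff.1 huv' with ⟨rfl, rfl⟩ | ⟨rfl, rfl⟩
    exacts [h1, (supDist_comm _ _).trans h1]
  have hxV h : x h ∈ V := hXV (mem_image_of_mem x (mem_univ h))
  obtain ⟨p, hp, hlen⟩ := exists_closed_walk_length_le E (x 0)
  obtain ⟨π, hπ0, hsum⟩ := exists_perm_sum_supDist_le_length hG p x rfl
    fun h => hp _ (reflTransGen_iff_reachable_fromEdgeSet.1 (hconn _ (hxV 0) _ (hxV h)))
  exact ⟨π, hπ0, hcard ▸ hsum.trans hlen⟩

end Steiner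

theorem steiner_lower_bound_by_path_general (d k : ℕ)
    (Λ : Fin (k + 1) → Finset (Fin d → ℤ))
    (hne : ∀ i, (Λ i).Nonempty) :
    sInf {s : ℕ | ∃ π : Equiv.Perm (Fin (k + 1)), π 0 = 0 ∧
        s = ∑ l : Fin k, setDist (Λ (π l.castSucc)) (Λ (π l.succ))} ≤
      2 * sInf {m : ℕ | ∃ x : Fin (k + 1) → (Fin d → ℤ),
        (∀ h, x h ∈ Λ h) ∧ steiner (Finset.image x Finset.univ) = m} := by
  obtain ⟨x, hx, hxm⟩ := Nat.sInf_mem (s := {m : ℕ | ∃ x : Fin (k + 1) → (Fin d → ℤ),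
    (∀ h, x h ∈ Λ h) ∧ steiner (Finset.image x Finset.univ) = m})
    ⟨_, fun i => (hne i).choose, fun i => (hne i).choose_spec, rfl⟩
  obtain ⟨π, hπ0, hsum⟩ := exists_perm_sum_supDist_le_two_mul_steiner x
  rw [← hxm]
  refine le_trans (Nat.sInf_le ⟨π, hπ0, rfl⟩) ?_
  calc ∑ l : Fin k, setDist (Λ (π l.castSucc)) (Λ (π l.succ))
      ≤ ∑ l : Fin k, supDist (x (π l.castSucc)) (x (π l.succ)) :=
      sum_le_sum fun l _ => setDist_le_supDist (hx _) (hx _)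
    _ ≤ 2 * steiner (image x univ) := hsum

/-- Lemma 3.3: the minimal Steiner tree number `T(I)` connecting the pairwise
disjoint nonempty sets `Λ_{i_0}, …, Λ_{i_k}` is at least one half of the
minimum, over permutations `π` of `{0,…,k}` fixing `0`, of
`∑_{l=1}^k d(Λ_{i_{π(l-1)}}, Λ_{i_{π(l)}})`. -/
theorem steiner_lower_bound_by_path (d k : ℕ) (hk : 1 ≤ k)
    (Λ : Fin (k + 1) → Finset (Fin d → ℤ))
    (hne : ∀ i, (Λ i).Nonempty)
    (hdisj : ∀ i j, i ≠ j → Disjoint (Λ i) (Λ j)) :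
    sInf {s : ℕ | ∃ π : Equiv.Perm (Fin (k + 1)), π 0 = 0 ∧
        s = ∑ l : Fin k, setDist (Λ (π l.castSucc)) (Λ (π l.succ))} ≤
      2 * sInf {m : ℕ | ∃ x : Fin (k + 1) → (Fin d → ℤ),
        (∀ h, x h ∈ Λ h) ∧ steiner (Finset.image x Finset.univ) = m} :=
  steiner_lower_bound_by_path_general d k Λ hne
end

section
/- Suppose for every finite X ⊆ ℤ^d intersecting each of the pairwise disjoint finite sets Λ_i, i ∈ I (|I| ≥ 2), one has T(I) ≤ (|I|-1)·diam(X) and T(I) ≤ 𝕋(X), where 𝕋(X) is the Steiner tree number and diam the sup-norm diameter. If sup_x ∑_{X ∋ x} e^{a𝕋(X) + b·diam(X)} ‖φ_X‖_∞ ≤ C for some a, b ≥ 0, then ∑_{X : X ∩ Λ_i ≠ ∅ ∀ i ∈ I} ‖φ_X‖_∞ ≤ C · (min_{i ∈ I} |Λ_i|) · exp{-(a + b/(|I|-1)) T(I)}. -/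
open Finset

/-- Sup-norm diameter of a finite subset of `ℤ^d`. -/
def latDiam {d : ℕ} (X : Finset (Fin d → ℤ)) : ℕ :=
  X.sup fun u => X.sup fun v => supDist u v

/-! Each `X` meeting every `Λ i` has weight `e^{a𝕋(X)+b·diam X} ≥ e^{(a+b/(n-1))T}`, so
`w X ≤ e^{-(a+b/(n-1))T} · e^{a𝕋(X)+b·diam X} w X`. Anchoring `X` at a point of `X ∩ Λ i₀`, where
`Λ i₀` is the smallest support, injects these `X` into pairs (anchor, set containing it), and the
weighted sum over sets containing a fixed anchor is at most `C`. -/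

section AnchoredSums

variable {β : Type*} (S : Finset β) {f : Finset β → ℝ}

theorem summable_sigma_anchor (hf : ∀ X, 0 ≤ f X)
    (hsum : ∀ x, Summable fun X : {X : Finset β // x ∈ X} => f X) :
    Summable fun σ : Σ x : S, {Y : Finset β // x.1 ∈ Y} => f σ.2.1 :=
  (summable_sigma_of_nonneg fun _ => hf _).mpr ⟨fun x => hsum x.1, Summable.of_finite⟩

variable [DecidableEq β] {P : Finset β → Prop}

noncomputable def anchorAt (hP : ∀ X, P X → (X ∩ S).Nonempty) (X : {X // P X}) :
    Σ x : S, {Y : Finset β // x.1 ∈ Y} :=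
  have hx := mem_inter.mp (hP X.1 X.2).choose_spec
  ⟨⟨_, hx.2⟩, ⟨X.1, hx.1⟩⟩

theorem anchorAt_injective (hP : ∀ X, P X → (X ∩ S).Nonempty) :
    Function.Injective (anchorAt S hP) :=
  fun _ _ h => Subtype.ext (congrArg (fun σ => σ.2.1) h)

theorem summable_subtype_of_inter_nonempty (hf : ∀ X, 0 ≤ f X)
    (hsum : ∀ x, Summable fun X : {X : Finset β // x ∈ X} => f X)
    (hP : ∀ X, P X → (X ∩ S).Nonempty) :
    Summable fun X : {X // P X} => f X :=
  (summable_sigma_anchor S hf hsum).comp_injective (anchorAt_injective S hP)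

theorem tsum_subtype_le_card_mul_of_inter_nonempty (hf : ∀ X, 0 ≤ f X)
    (hsum : ∀ x, Summable fun X : {X : Finset β // x ∈ X} => f X)
    (hP : ∀ X, P X → (X ∩ S).Nonempty) {C : ℝ}
    (hC : ∀ x ∈ S, ∑' X : {X : Finset β // x ∈ X}, f X ≤ C) :
    ∑' X : {X // P X}, f X ≤ #S * C :=
  calc ∑' X : {X // P X}, f X
      ≤ ∑' σ : Σ x : S, {Y : Finset β // x.1 ∈ Y}, f σ.2.1 :=
        (summable_subtype_of_inter_nonempty S hf hsum hP).tsum_le_tsum_of_inj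
          (anchorAt S hP) (anchorAt_injective S hP) (fun _ _ => hf _) (fun _ => le_rfl)
          (summable_sigma_anchor S hf hsum)
    _ = ∑ x : S, ∑' X : {Y : Finset β // x.1 ∈ Y}, f X := by
        rw [(summable_sigma_anchor S hf hsum).tsum_sigma' (fun x => hsum x.1), tsum_fintype]
    _ ≤ ∑ _x : S, C := sum_le_sum fun x _ => hC x.1 x.2
    _ = #S * C := by simp

end AnchoredSums

theorem add_div_mul_le {a b k s D T : ℝ} (ha : 0 ≤ a) (hb : 0 ≤ b) (hk : 0 < k)
    (hD : T ≤ k * D) (hs : T ≤ s) : (a + b / k) * T ≤ a * s + b * D :=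
  calc (a + b / k) * T = a * T + b / k * T := add_mul _ _ _
    _ ≤ a * s + b / k * (k * D) := by gcongr
    _ = a * s + b * D := by field_simp

theorem le_exp_neg_mul_mul_exp_mul {c T E w : ℝ} (h : c * T ≤ E) (hw : 0 ≤ w) :
    w ≤ Real.exp (-c * T) * (Real.exp E * w) :=
  calc w = Real.exp (-c * T) * (Real.exp (c * T) * w) := by
        rw [← mul_assoc, ← Real.exp_add, neg_mul, neg_add_cancel, Real.exp_zero, one_mul]
    _ ≤ Real.exp (-c * T) * (Real.exp E * w) := by gcongr

/-- The estimate of Lemma 3.2: if `T ≤ (|I|-1)·diam X` and `T ≤ 𝕋(X)` for every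
`X` intersecting all of the pairwise disjoint nonempty finite sets `Λ_i`, and
`sup_x ∑_{X ∋ x} e^{a𝕋(X)+b·diam X} ‖φ_X‖ ≤ C`, then
`∑_{X : X∩Λ_i ≠ ∅ ∀i} ‖φ_X‖ ≤ C · min_i|Λ_i| · e^{-(a+b/(n-1))T}`. -/
theorem weighted_potential_sum_bound (d n : ℕ) (hn : 2 ≤ n) (a b C T : ℝ)
    (ha : 0 ≤ a) (hb : 0 ≤ b)
    (Λ : Fin n → Finset (Fin d → ℤ))
    (w : Finset (Fin d → ℤ) → ℝ) (hw : ∀ X, 0 ≤ w X)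
    (hT : ∀ X : Finset (Fin d → ℤ), (∀ i, (X ∩ Λ i).Nonempty) →
      T ≤ ((n : ℝ) - 1) * latDiam X ∧ T ≤ steiner X)
    (hsummable : ∀ x : Fin d → ℤ,
      Summable fun X : {X : Finset (Fin d → ℤ) // x ∈ X} =>
        Real.exp (a * steiner X.1 + b * latDiam X.1) * w X.1)
    (hC : ∀ x : Fin d → ℤ,
      ∑' X : {X : Finset (Fin d → ℤ) // x ∈ X},
        Real.exp (a * steiner X.1 + b * latDiam X.1) * w X.1 ≤ C) :
    ∑' X : {X : Finset (Fin d → ℤ) // ∀ i, (X ∩ Λ i).Nonempty}, w X.1 ≤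
      C * (Finset.univ.inf' ⟨⟨0, by omega⟩, Finset.mem_univ _⟩
            fun i => ((Λ i).card : ℝ)) *
        Real.exp (-(a + b / ((n : ℝ) - 1)) * T) := by
  obtain ⟨i₀, -, hi₀⟩ := exists_mem_eq_inf' (univ_nonempty_iff.mpr ⟨⟨0, by omega⟩⟩)
    fun i => ((Λ i).card : ℝ)
  rw [hi₀]
  have hk : (0 : ℝ) < n - 1 := by
    have : (2 : ℝ) ≤ n := by exact_mod_cast hn
    linarith
  set ε := Real.exp (-(a + b / ((n : ℝ) - 1)) * T)
  set F := fun X : Finset (Fin d → ℤ) => Real.exp (a * steiner X + b * latDiam X) * w X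
  have hF : ∀ X, 0 ≤ F X := fun X => mul_nonneg (Real.exp_nonneg _) (hw X)
  have hP : ∀ X, (∀ i, (X ∩ Λ i).Nonempty) → (X ∩ Λ i₀).Nonempty := fun X h => h i₀
  have hwF : ∀ X : {X : Finset (Fin d → ℤ) // ∀ i, (X ∩ Λ i).Nonempty}, w X ≤ ε * F X :=
    fun X => le_exp_neg_mul_mul_exp_mul
      (add_div_mul_le ha hb hk (hT X.1 X.2).1 (hT X.1 X.2).2) (hw X)
  have hεF := (summable_subtype_of_inter_nonempty _ hF hsummable hP).mul_left ε
  calc ∑' X : {X : Finset (Fin d → ℤ) // ∀ i, (X ∩ Λ i).Nonempty}, w X.1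
      ≤ ∑' X : {X : Finset (Fin d → ℤ) // ∀ i, (X ∩ Λ i).Nonempty}, ε * F X :=
        (hεF.of_nonneg_of_le (fun X => hw X.1) hwF).tsum_le_tsum hwF hεF
    _ = ε * ∑' X : {X : Finset (Fin d → ℤ) // ∀ i, (X ∩ Λ i).Nonempty}, F X := tsum_mul_left
    _ ≤ ε * (#(Λ i₀) * C) := by
        gcongr
        exact tsum_subtype_le_card_mul_of_inter_nonempty _ hF hsummable hP fun x _ => hC x
    _ = C * #(Λ i₀) * ε := by ring
end
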